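/- Let N and p be positive integers with p ≤ N, and let μ be a probability measure on the space of real N×p matrices that is supported on the Stiefel manifold {U : UᵀU = Iₚ}. Define M = ∫ U Uᵀ dμ(U) (an entrywise/Bochner integral, which exists since U ↦ UUᵀ is bounded on the Stiefel manifold), and let λ₁ ≥ ⋯ ≥ λ_N be the eigenvalues of the symmetric matrix M. Then: (i) for every real N×p matrix Û with orthonormal columns, ∫ ‖ÛÛᵀ − UUᵀ‖_F² dμ(U) = 2p − 2 tr(Ûᵀ M Û); and (ii) the infimum of ∫ ‖ÛÛᵀ − UUᵀ‖_F² dμ(U) over all N×p matrices Û with orthonormal columns equals 2p − 2∑_{k=1}^{p} λₖ, and is attained when the columns of Û are p orthonormal eigenvectors of M associated with its p largest eigenvalues. -/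

import Mathlib

open Matrix MeasureTheory

/-!
For a frame `U` (`UᵀU = 1`), `UUᵀ` is a symmetric idempotent of trace `p`, so expanding the square
gives `‖ÛÛᵀ − UUᵀ‖_F² = 2p − 2 tr(ÛÛᵀ · UUᵀ)`, which is affine in `UUᵀ`; integrating gives (i).
For (ii), diagonalise `M = W diag(λ) Wᵀ`. Then `tr(ÛᵀMÛ) = ∑ λᵢ cᵢ`, where the `cᵢ` are the diagonal
entries of the projection `(WᵀÛ)(WᵀÛ)ᵀ`; hence `cᵢ ∈ [0, 1]` and `∑ cᵢ = p`, and such a weighted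
sum is at most the sum of the `p` largest eigenvalues, with equality for a frame of eigenvectors.
-/

namespace Matrix

section Frames

variable {R : Type*} [CommRing R] {n k : Type*} [Fintype n] [Fintype k]

lemma isIdempotentElem_mul_transpose_self [DecidableEq k] {U : Matrix n k R} (hU : Uᵀ * U = 1) :
    IsIdempotentElem (U * Uᵀ) := by
  rw [IsIdempotentElem, Matrix.mul_assoc, ← Matrix.mul_assoc Uᵀ, hU, Matrix.one_mul]

lemma trace_mul_transpose_self [DecidableEq k] {U : Matrix n k R} (hU : Uᵀ * U = 1) :
    trace (U * Uᵀ) = Fintype.card k := by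
  rw [trace_mul_comm, hU, trace_one]

lemma trace_sq_sub_mul_transpose_self [DecidableEq k] {U V : Matrix n k R} (hU : Uᵀ * U = 1)
    (hV : Vᵀ * V = 1) :
    trace ((U * Uᵀ - V * Vᵀ)ᵀ * (U * Uᵀ - V * Vᵀ))
      = 2 * Fintype.card k - 2 * trace (U * Uᵀ * (V * Vᵀ)) := by
  rw [transpose_sub, transpose_mul, transpose_mul, transpose_transpose, transpose_transpose,
    sub_mul, mul_sub, mul_sub, (isIdempotentElem_mul_transpose_self hU).eq,
    (isIdempotentElem_mul_transpose_self hV).eq, trace_sub, trace_sub, trace_sub,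
    trace_mul_transpose_self hU, trace_mul_transpose_self hV, trace_mul_comm (V * Vᵀ)]
  ring

lemma trace_transpose_mul_mul_of_mulVec_eq [DecidableEq k] {U : Matrix n k R} (hU : Uᵀ * U = 1)
    {M : Matrix n n R} {d : k → R} (hd : ∀ j, M *ᵥ (fun i => U i j) = d j • fun i => U i j) :
    trace (Uᵀ * M * U) = ∑ j, d j := by
  have hMU : M * U = U * diagonal d := by
    ext i j
    rw [mul_diagonal]
    simpa [mul_apply, mulVec, dotProduct, mul_comm] using congrFun (hd j) i
  rw [Matrix.mul_assoc, hMU, ← Matrix.mul_assoc, hU, Matrix.one_mul, trace_diagonal]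

lemma trace_transpose_mul_diagonal_mul [DecidableEq n] (d : n → R) (B : Matrix n k R) :
    trace (Bᵀ * diagonal d * B) = ∑ i, d i * (B * Bᵀ) i i := by
  rw [Matrix.mul_assoc, trace_mul_comm, Matrix.mul_assoc]
  simp only [trace, diag_apply, diagonal_mul]

end Frames

variable {n k : Type*} [Fintype n]

lemma diag_mul_transpose_self_mem_Icc [Fintype k] [DecidableEq k] {U : Matrix n k ℝ}
    (hU : Uᵀ * U = 1) (i : n) :
    (U * Uᵀ) i i ∈ Set.Icc 0 1 := by
  set Q := U * Uᵀ with hQ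
  have hsymm : ∀ j, Q j i = Q i j := fun j => by
    simp only [hQ, mul_apply, transpose_apply, mul_comm (U j _)]
  have hsq : Q i i = ∑ j, Q i j ^ 2 := by
    calc Q i i = (Q * Q) i i := by rw [(isIdempotentElem_mul_transpose_self hU).eq]
      _ = ∑ j, Q i j ^ 2 := by simp only [mul_apply, hsymm, sq]
  have hle : Q i i ^ 2 ≤ Q i i :=
    hsq ▸ Finset.single_le_sum (f := fun j => Q i j ^ 2) (fun j _ => sq_nonneg _)
      (Finset.mem_univ i)
  have hnonneg : 0 ≤ Q i i := hsq ▸ Finset.sum_nonneg fun j _ => sq_nonneg _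
  exact ⟨hnonneg, by nlinarith⟩

namespace IsHermitian

variable [DecidableEq n] {M : Matrix n n ℝ} (hM : M.IsHermitian)
include hM

lemma transpose_eigenvectorUnitary_mul_self :
    (hM.eigenvectorUnitary : Matrix n n ℝ)ᵀ * hM.eigenvectorUnitary = 1 := by
  simpa [star_eq_conjTranspose] using mem_unitaryGroup_iff'.mp hM.eigenvectorUnitary.2

lemma eigenvectorUnitary_mul_transpose_self :
    (hM.eigenvectorUnitary : Matrix n n ℝ) * (hM.eigenvectorUnitary : Matrix n n ℝ)ᵀ = 1 := by
  simpa [star_eq_conjTranspose] using mem_unitaryGroup_iff.mp hM.eigenvectorUnitary.2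

lemma eq_eigenvectorUnitary_mul_diagonal_mul_transpose :
    M = hM.eigenvectorUnitary * diagonal hM.eigenvalues *
      (hM.eigenvectorUnitary : Matrix n n ℝ)ᵀ := by
  simpa [star_eq_conjTranspose] using hM.spectral_theorem

lemma exists_trace_transpose_mul_mul_eq [Fintype k] [DecidableEq k] {U : Matrix n k ℝ}
    (hU : Uᵀ * U = 1) :
    ∃ c : n → ℝ, (∀ i, c i ∈ Set.Icc 0 1) ∧ ∑ i, c i = Fintype.card k ∧
      trace (Uᵀ * M * U) = ∑ i, hM.eigenvalues i * c i := by
  set W : Matrix n n ℝ := ↑hM.eigenvectorUnitary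
  set B := Wᵀ * U
  have hB : Bᵀ * B = 1 := by
    rw [transpose_mul, transpose_transpose, Matrix.mul_assoc, ← Matrix.mul_assoc W,
      hM.eigenvectorUnitary_mul_transpose_self, Matrix.one_mul, hU]
  refine ⟨fun i => (B * Bᵀ) i i, diag_mul_transpose_self_mem_Icc hB,
    trace_mul_transpose_self hB, ?_⟩
  rw [← trace_transpose_mul_diagonal_mul]
  conv_lhs => rw [hM.eq_eigenvectorUnitary_mul_diagonal_mul_transpose]
  simp only [B, W, transpose_mul, transpose_transpose, Matrix.mul_assoc]

lemma exists_transpose_mul_self_eq_one_mulVec_eq [DecidableEq k] {f : k → n}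
    (hf : Function.Injective f) :
    ∃ U : Matrix n k ℝ, Uᵀ * U = 1 ∧
      ∀ j, M *ᵥ (fun i => U i j) = hM.eigenvalues (f j) • fun i => U i j := by
  refine ⟨(hM.eigenvectorUnitary : Matrix n n ℝ).submatrix id f, ?_,
    fun j => hM.mulVec_eigenvectorBasis (f j)⟩
  rw [transpose_submatrix, ← submatrix_mul _ _ _ _ _ Function.bijective_id,
    hM.transpose_eigenvectorUnitary_mul_self, submatrix_one f hf]

end IsHermitian

end Matrix

/-- Bathtub principle. -/
lemma Finset.sum_mul_le_sum_of_forall_le {ι : Type*} [Fintype ι] [DecidableEq ι] (s : Finset ι)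
    {lam c : ι → ℝ} {t : ℝ} (hs : ∀ i ∈ s, t ≤ lam i) (hsc : ∀ i ∉ s, lam i ≤ t)
    (hc : ∀ i, c i ∈ Set.Icc 0 1) (hsum : ∑ i, c i = s.card) :
    ∑ i, lam i * c i ≤ ∑ i ∈ s, lam i := by
  have hmass : ∑ i, t * ((if i ∈ s then 1 else 0) - c i) = 0 := by
    rw [← Finset.mul_sum, Finset.sum_sub_distrib, Finset.sum_boole, hsum]
    simp
  have hterm : ∀ i, lam i * c i + t * ((if i ∈ s then 1 else 0) - c i)
      ≤ lam i * (if i ∈ s then 1 else 0) := fun i => by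
    obtain ⟨hc0, hc1⟩ := hc i
    by_cases hi : i ∈ s
    · simp only [hi, if_true]; nlinarith [hs i hi]
    · simp only [hi, if_false]; nlinarith [hsc i hi]
  calc ∑ i, lam i * c i
      = ∑ i, (lam i * c i + t * ((if i ∈ s then 1 else 0) - c i)) := by
        rw [Finset.sum_add_distrib, hmass, add_zero]
    _ ≤ ∑ i, lam i * (if i ∈ s then 1 else 0) := Finset.sum_le_sum fun i _ => hterm i
    _ = ∑ i ∈ s, lam i := by simp

lemma Antitone.sum_mul_le_sum_castLE {N p : ℕ} {lam c : Fin N → ℝ} (hlam : Antitone lam)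
    (hp : 0 < p) (hpN : p ≤ N) (hc : ∀ i, c i ∈ Set.Icc 0 1) (hsum : ∑ i, c i = p) :
    ∑ i, lam i * c i ≤ ∑ k : Fin p, lam (Fin.castLE hpN k) := by
  classical
  have hmem : ∀ i, i ∈ Finset.univ.map (Fin.castLEEmb hpN) ↔ (i : ℕ) < p := fun i => by
    simp [← Set.mem_range, Fin.range_castLE]
  have hlast : p - 1 < N := by omega
  calc ∑ i, lam i * c i ≤ ∑ i ∈ Finset.univ.map (Fin.castLEEmb hpN), lam i := by
        refine Finset.sum_mul_le_sum_of_forall_le _ (t := lam ⟨p - 1, hlast⟩)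
          (fun i hi => hlam ?_) (fun i hi => hlam ?_) hc (by simpa using hsum)
        · rw [hmem] at hi; exact Fin.le_def.2 (show (i : ℕ) ≤ p - 1 by omega)
        · rw [hmem] at hi; exact Fin.le_def.2 (show p - 1 ≤ (i : ℕ) by omega)
    _ = ∑ k : Fin p, lam (Fin.castLE hpN k) := Finset.sum_map _ _ _

/-- Ky Fan's maximum principle. -/
lemma Matrix.IsHermitian.trace_transpose_mul_mul_le {N p : ℕ} (hp : 0 < p) (hpN : p ≤ N)
    {M : Matrix (Fin N) (Fin N) ℝ} (hM : M.IsHermitian) {e : Equiv.Perm (Fin N)}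
    (hsort : Antitone (hM.eigenvalues ∘ e)) {U : Matrix (Fin N) (Fin p) ℝ} (hU : Uᵀ * U = 1) :
    trace (Uᵀ * M * U) ≤ ∑ k : Fin p, (hM.eigenvalues ∘ e) (Fin.castLE hpN k) := by
  obtain ⟨c, hc, hsum, htr⟩ := hM.exists_trace_transpose_mul_mul_eq hU
  rw [htr, ← Equiv.sum_comp e]
  exact hsort.sum_mul_le_sum_castLE hp hpN (fun i => hc (e i))
    (by rw [Equiv.sum_comp e, hsum, Fintype.card_fin])

section Integral

variable {Ω n : Type*} [MeasurableSpace Ω] {μ : Measure Ω} [Fintype n]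

lemma integrable_trace_mul {F : Ω → Matrix n n ℝ} (hF : ∀ i j, Integrable (fun ω => F ω i j) μ)
    (A : Matrix n n ℝ) : Integrable (fun ω => trace (A * F ω)) μ := by
  simp only [trace, diag_apply, mul_apply]
  exact integrable_finsetSum _ fun i _ => integrable_finsetSum _ fun j _ => (hF j i).const_mul _

lemma integral_trace_mul {F : Ω → Matrix n n ℝ} (hF : ∀ i j, Integrable (fun ω => F ω i j) μ)
    (A : Matrix n n ℝ) :
    ∫ ω, trace (A * F ω) ∂μ = trace (A * of fun i j => ∫ ω, F ω i j ∂μ) := by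
  simp only [trace, diag_apply, mul_apply, of_apply]
  rw [integral_finsetSum (f := fun i ω => ∑ j, A i j * F ω j i) _
    fun i _ => integrable_finsetSum _ fun j _ => (hF j i).const_mul _]
  refine Finset.sum_congr rfl fun i _ => ?_
  rw [integral_finsetSum _ fun j _ => (hF j i).const_mul _]
  exact Finset.sum_congr rfl fun j _ => integral_const_mul _ _

lemma integral_trace_sq_sub_mul_transpose_self [IsProbabilityMeasure μ] {k : Type*} [Fintype k]
    [DecidableEq k] {V : Ω → Matrix n k ℝ} (hV : ∀ᵐ ω ∂μ, (V ω)ᵀ * V ω = 1)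
    (hint : ∀ i j, Integrable (fun ω => (V ω * (V ω)ᵀ) i j) μ) {U : Matrix n k ℝ}
    (hU : Uᵀ * U = 1) :
    ∫ ω, trace ((U * Uᵀ - V ω * (V ω)ᵀ)ᵀ * (U * Uᵀ - V ω * (V ω)ᵀ)) ∂μ
      = 2 * Fintype.card k
        - 2 * trace (Uᵀ * (of fun i j => ∫ ω, (V ω * (V ω)ᵀ) i j ∂μ) * U) := by
  calc ∫ ω, trace ((U * Uᵀ - V ω * (V ω)ᵀ)ᵀ * (U * Uᵀ - V ω * (V ω)ᵀ)) ∂μ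
      = ∫ ω, (2 * Fintype.card k - 2 * trace (U * Uᵀ * (V ω * (V ω)ᵀ))) ∂μ :=
        integral_congr_ae (hV.mono fun ω hω => trace_sq_sub_mul_transpose_self hU hω)
    _ = 2 * Fintype.card k - 2 * ∫ ω, trace (U * Uᵀ * (V ω * (V ω)ᵀ)) ∂μ := by
        rw [integral_sub (integrable_const _) ((integrable_trace_mul hint _).const_mul 2),
          integral_const, integral_const_mul, probReal_univ, one_smul]
    _ = _ := by rw [integral_trace_mul hint, Matrix.mul_assoc, trace_mul_comm, Matrix.mul_assoc]

end Integral

theorem stmt_4_general (N p : ℕ) (hp : 0 < p) (hpN : p ≤ N)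
    (μ : Measure (Fin N → Fin p → ℝ)) [IsProbabilityMeasure μ]
    (hsupp : ∀ᵐ V ∂μ, (Matrix.of V)ᵀ * Matrix.of V = 1)
    (hint : ∀ i j : Fin N,
      Integrable (fun V => (Matrix.of V * (Matrix.of V)ᵀ) i j) μ)
    (M : Matrix (Fin N) (Fin N) ℝ)
    (hMdef : ∀ i j, M i j = ∫ V, (Matrix.of V * (Matrix.of V)ᵀ) i j ∂μ)
    (hM : M.IsHermitian)
    (lam : Fin N → ℝ) (hsort : Antitone lam)
    (hperm : ∃ e : Equiv.Perm (Fin N), lam = hM.eigenvalues ∘ e) :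
    (∀ Uh : Matrix (Fin N) (Fin p) ℝ, Uhᵀ * Uh = 1 →
      ∫ V, Matrix.trace ((Uh * Uhᵀ - Matrix.of V * (Matrix.of V)ᵀ)ᵀ *
          (Uh * Uhᵀ - Matrix.of V * (Matrix.of V)ᵀ)) ∂μ
        = 2 * (p : ℝ) - 2 * Matrix.trace (Uhᵀ * M * Uh)) ∧
    sInf {t : ℝ | ∃ Uh : Matrix (Fin N) (Fin p) ℝ, Uhᵀ * Uh = 1 ∧
        t = ∫ V, Matrix.trace ((Uh * Uhᵀ - Matrix.of V * (Matrix.of V)ᵀ)ᵀ *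
          (Uh * Uhᵀ - Matrix.of V * (Matrix.of V)ᵀ)) ∂μ}
      = 2 * (p : ℝ) - 2 * ∑ k : Fin p, lam (Fin.castLE hpN k) ∧
    (∀ Uh : Matrix (Fin N) (Fin p) ℝ, Uhᵀ * Uh = 1 →
      (∀ k : Fin p, M.mulVec (fun i => Uh i k) = lam (Fin.castLE hpN k) • fun i => Uh i k) →
      ∫ V, Matrix.trace ((Uh * Uhᵀ - Matrix.of V * (Matrix.of V)ᵀ)ᵀ *
          (Uh * Uhᵀ - Matrix.of V * (Matrix.of V)ᵀ)) ∂μ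
        = 2 * (p : ℝ) - 2 * ∑ k : Fin p, lam (Fin.castLE hpN k)) := by
  obtain ⟨e, rfl⟩ := hperm
  have hM_eq : M = of fun i j => ∫ V, (of V * (of V)ᵀ) i j ∂μ := ext hMdef
  have mean_dist : ∀ U : Matrix (Fin N) (Fin p) ℝ, Uᵀ * U = 1 →
      ∫ V, trace ((U * Uᵀ - of V * (of V)ᵀ)ᵀ * (U * Uᵀ - of V * (of V)ᵀ)) ∂μ
        = 2 * (p : ℝ) - 2 * trace (Uᵀ * M * U) := fun U hU => by
    rw [integral_trace_sq_sub_mul_transpose_self hsupp hint hU, Fintype.card_fin, hM_eq]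
  have mean_dist_eigen : ∀ U : Matrix (Fin N) (Fin p) ℝ, Uᵀ * U = 1 →
      (∀ k, M *ᵥ (fun i => U i k) = (hM.eigenvalues ∘ e) (Fin.castLE hpN k) • fun i => U i k) →
      ∫ V, trace ((U * Uᵀ - of V * (of V)ᵀ)ᵀ * (U * Uᵀ - of V * (of V)ᵀ)) ∂μ
        = 2 * (p : ℝ) - 2 * ∑ k : Fin p, (hM.eigenvalues ∘ e) (Fin.castLE hpN k) :=
    fun U hU heig => by rw [mean_dist U hU, trace_transpose_mul_mul_of_mulVec_eq hU heig]
  refine ⟨mean_dist, IsLeast.csInf_eq ⟨?_, ?_⟩, mean_dist_eigen⟩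
  · obtain ⟨U, hU, heig⟩ :=
      hM.exists_transpose_mul_self_eq_one_mulVec_eq (e.injective.comp (Fin.castLE_injective hpN))
    exact ⟨U, hU, (mean_dist_eigen U hU heig).symm⟩
  · rintro t ⟨U, hU, rfl⟩
    rw [mean_dist U hU]
    linarith [hM.trace_transpose_mul_mul_le hp hpN hsort hU]

/-- For a probability measure `μ` supported on the Stiefel manifold, with
`M = ∫ U Uᵀ dμ` (entrywise) and sorted eigenvalues `λ₁ ≥ ⋯ ≥ λ_N` of `M`:
(i) `∫ ‖ÛÛᵀ − UUᵀ‖_F² dμ = 2p − 2 tr(Ûᵀ M Û)` for every `Û` with orthonormal columns;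
(ii) the infimum of this quantity over such `Û` equals `2p − 2∑_{k≤p} λₖ`, attained when
the columns of `Û` are `p` orthonormal eigenvectors of `M` for its `p` largest
eigenvalues. -/
theorem stmt_4 (N p : ℕ) (hN : 0 < N) (hp : 0 < p) (hpN : p ≤ N)
    (μ : Measure (Fin N → Fin p → ℝ)) [IsProbabilityMeasure μ]
    (hsupp : ∀ᵐ V ∂μ, (Matrix.of V)ᵀ * Matrix.of V = 1)
    (hint : ∀ i j : Fin N,
      Integrable (fun V => (Matrix.of V * (Matrix.of V)ᵀ) i j) μ)
    (hint2 : ∀ Uh : Matrix (Fin N) (Fin p) ℝ, Integrable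
      (fun V => Matrix.trace ((Uh * Uhᵀ - Matrix.of V * (Matrix.of V)ᵀ)ᵀ *
        (Uh * Uhᵀ - Matrix.of V * (Matrix.of V)ᵀ))) μ)
    (M : Matrix (Fin N) (Fin N) ℝ)
    (hMdef : ∀ i j, M i j = ∫ V, (Matrix.of V * (Matrix.of V)ᵀ) i j ∂μ)
    (hM : M.IsHermitian)
    (lam : Fin N → ℝ) (hsort : Antitone lam)
    (hperm : ∃ e : Equiv.Perm (Fin N), lam = hM.eigenvalues ∘ e) :
    (∀ Uh : Matrix (Fin N) (Fin p) ℝ, Uhᵀ * Uh = 1 →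
      ∫ V, Matrix.trace ((Uh * Uhᵀ - Matrix.of V * (Matrix.of V)ᵀ)ᵀ *
          (Uh * Uhᵀ - Matrix.of V * (Matrix.of V)ᵀ)) ∂μ
        = 2 * (p : ℝ) - 2 * Matrix.trace (Uhᵀ * M * Uh)) ∧
    sInf {t : ℝ | ∃ Uh : Matrix (Fin N) (Fin p) ℝ, Uhᵀ * Uh = 1 ∧
        t = ∫ V, Matrix.trace ((Uh * Uhᵀ - Matrix.of V * (Matrix.of V)ᵀ)ᵀ *
          (Uh * Uhᵀ - Matrix.of V * (Matrix.of V)ᵀ)) ∂μ}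
      = 2 * (p : ℝ) - 2 * ∑ k : Fin p, lam (Fin.castLE hpN k) ∧
    (∀ Uh : Matrix (Fin N) (Fin p) ℝ, Uhᵀ * Uh = 1 →
      (∀ k : Fin p, M.mulVec (fun i => Uh i k) = lam (Fin.castLE hpN k) • fun i => Uh i k) →
      ∫ V, Matrix.trace ((Uh * Uhᵀ - Matrix.of V * (Matrix.of V)ᵀ)ᵀ *
          (Uh * Uhᵀ - Matrix.of V * (Matrix.of V)ᵀ)) ∂μ
        = 2 * (p : ℝ) - 2 * ∑ k : Fin p, lam (Fin.castLE hpN k)) :=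
  stmt_4_general N p hp hpN μ hsupp hint M hMdef hM lam hsort hperm
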